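/- Let θ < κ be infinite regular cardinals with κ uncountable. For every condition ⟨T, f⟩ in the poset S^κ_θ, say of height α+1, there exists a condition ⟨T', f'⟩ ≤ ⟨T, f⟩ in S^κ_θ of height α+2 such that for some τ < τ' < θ one has Δ(f'(α+1)(τ), f'(α+1)(τ')) = α (i.e., the top level of the new ascent path contains two nodes that first disagree exactly at α). -/

import Mathlib

noncomputable section

open Ordinal Set

/-- A node of a streamlined tree over `κ` is a function `s : α → κ` for an ordinal `α`;
we code it by its graph, a set of pairs `(ε, v)`. -/
abbrev PNode : Type 1 := Set (Ordinal × Ordinal)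

/-- The set of ordinals in the domain of a coded node. -/
def ndom (s : PNode) : Set Ordinal := {ε | ∃ v, (ε, v) ∈ s}

/-- `s` codes a function from (the ordinals below) `α` to (the ordinals below) `ν`. -/
def IsNodeOf (ν α : Ordinal) (s : PNode) : Prop :=
  (∀ p ∈ s, p.1 < α ∧ p.2 < ν) ∧ ∀ ε, ε < α → ∃! v : Ordinal, (ε, v) ∈ s

/-- The restriction `s ↾ α` of a node. -/
def nrestrict (s : PNode) (α : Ordinal) : PNode := {p ∈ s | p.1 < α}

/-- The node `s * t`, with domain `dom t`, agreeing with `s` on `dom s` and with `t` elsewhere. -/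
def nstar (s t : PNode) : PNode :=
  {p ∈ s | p.1 ∈ ndom t} ∪ {p ∈ t | p.1 ∉ ndom s}

/-- The `α`-th level of a tree. -/
def level (T : Set PNode) (α : Ordinal) : Set PNode := {t ∈ T | ndom t = Set.Iio α}

/-- A streamlined tree: closed under restrictions. -/
def IsStreamlined (T : Set PNode) : Prop := ∀ t ∈ T, ∀ α : Ordinal, nrestrict t α ∈ T

/-- Uniform homogeneity. -/
def UnifHomog (T : Set PNode) : Prop := ∀ s ∈ T, ∀ t ∈ T, nstar s t ∈ T

/-- Normality for a tree of height `h`. -/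
def IsNormalOfHeight (T : Set PNode) (h : Ordinal) : Prop :=
  ∀ x ∈ T, ∀ α, α < h → ∃ y ∈ level T α, x ⊆ y ∨ y ⊆ x

/-- Two nodes are mutually exclusive iff they disagree everywhere on their common domain. -/
def MutExc (s t : PNode) : Prop :=
  ∀ ε v w : Ordinal, (ε, v) ∈ s → (ε, w) ∈ t → v ≠ w

/-- `s =* t` : same domain and agreement on a final segment of the domain. -/
def EqStar (s t : PNode) : Prop :=
  ndom s = ndom t ∧ ∃ α ∈ ndom s, ∀ β, α ≤ β → ∀ v : Ordinal, ((β, v) ∈ s ↔ (β, v) ∈ t)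

/-- `Δ(s,t)`: the least element of `{dom s, dom t} ∪ {δ ∈ dom s ∩ dom t ∣ s(δ) ≠ t(δ)}`. -/
def nDelta (s t : PNode) : Ordinal :=
  sInf ({δ | δ ∉ ndom s} ∪ {δ | δ ∉ ndom t} ∪
    {δ | ∃ v w : Ordinal, (δ, v) ∈ s ∧ (δ, w) ∈ t ∧ v ≠ w})

/-- `supp(f,g)` for two `θ`-sequences of nodes. -/
def supp (θo : Ordinal) (f g : Ordinal → PNode) : Set Ordinal :=
  {τ | τ < θo ∧ (f τ ⊆ g τ ∨ g τ ⊆ f τ)}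

/-- An `α`-branch of `T`. -/
def IsBranch (T : Set PNode) (α : Ordinal) (B : Set PNode) : Prop :=
  B ⊆ T ∧ (∀ x ∈ B, ∀ y ∈ B, x ⊆ y ∨ y ⊆ x) ∧
    {β : Ordinal | ∃ x ∈ B, ndom x = Set.Iio β} = Set.Iio α

/-- The set `V(T)` of vanishing levels of `T`. -/
def VSet (T : Set PNode) : Set Ordinal :=
  {α | Order.IsSuccLimit α ∧ ∀ x ∈ T, (∃ β, β < α ∧ ndom x = Set.Iio β) →
    ∃ B, IsBranch T α B ∧ x ∈ B ∧ ⋃₀ B ∉ T}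

/-- A closed set of ordinals. -/
def OrdClosed (A : Set Ordinal) : Prop :=
  ∀ α : Ordinal, Order.IsSuccLimit α → (∀ β, β < α → (A ∩ Set.Ioo β α).Nonempty) → α ∈ A

/-- A mutually exclusive `F`-ascent path (`F` given via the membership predicate `InF`)
through a tree `T` of height `γ`. -/
def MEAscentPath (θo : Ordinal) (InF : Set Ordinal → Prop) (T : Set PNode) (γ : Ordinal)
    (f : Ordinal → Ordinal → PNode) : Prop :=
  (∀ α, α < γ → ∀ τ, τ < θo → f α τ ∈ level T α) ∧
  (∀ α β, α < β → β < γ → InF (supp θo (f α) (f β))) ∧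
  (∀ α, 0 < α → α < γ → ∀ τ τ', τ < θo → τ' < θo → τ ≠ τ' → MutExc (f α τ) (f α τ'))

/-- A condition: a pair `⟨T, f⟩` together with the ordinal `η` such that `T` has height `η + 1`. -/
structure SCond : Type 1 where
  T : Set PNode
  f : Ordinal.{0} → Ordinal.{0} → PNode
  η : Ordinal.{0}

/-- Membership in the filter generated by the decreasing sequence `X` of length `ζ`. -/
def InFX (ζ : Ordinal) (X : Ordinal → Set Ordinal) (Y : Set Ordinal) : Prop :=
  ∃ ξ, ξ < ζ ∧ X ξ ⊆ Y

/-- `p` is a condition of the forcing `𝕊^κ_𝐗`. -/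
def IsSCondX (κ : Cardinal) (θo : Ordinal) (InF : Set Ordinal → Prop) (p : SCond) : Prop :=
  (∀ t ∈ p.T, ∃ α, α ≤ p.η ∧ IsNodeOf κ.ord α t) ∧
  IsStreamlined p.T ∧
  UnifHomog p.T ∧
  IsNormalOfHeight p.T (p.η + 1) ∧
  (∀ α, α ≤ p.η → (level p.T α).Nonempty) ∧
  (∀ α, α ≤ p.η → Cardinal.mk ↥(level p.T α) < Cardinal.lift.{1} κ) ∧
  MEAscentPath θo InF p.T (p.η + 1) p.f ∧
  OrdClosed (VSet p.T) ∧
  (Order.IsSuccLimit p.η → p.η ∈ VSet p.T) ∧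
  (∀ α, 0 < α → α ≤ p.η → ∀ t ∈ level p.T α, InF {τ | τ < θo ∧ MutExc t (p.f α τ)})

/-- `p ≤ q` in `𝕊^κ_𝐗` (and in `𝕊^κ_θ`): `p` end-extends `q` in both coordinates. -/
def sext (θo : Ordinal) (p q : SCond) : Prop :=
  q.η ≤ p.η ∧
  (∀ t : PNode, t ∈ q.T ↔ (t ∈ p.T ∧ ∃ α, α ≤ q.η ∧ ndom t = Set.Iio α)) ∧
  (∀ α, α ≤ q.η → ∀ τ, τ < θo → p.f α τ = q.f α τ)

/-- Even ordinals (limit ordinals are even). -/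
def EvenOrd (β : Ordinal) : Prop := ∃ γ : Ordinal, β = 2 * γ

/-- Player II has a winning strategy in the game `⅁_μ(P)`: she can choose conditions at all
even (incl. limit) stages `< μ`, only as a function of the previous moves, so that as long as
player I plays legally at odd stages, the resulting `μ`-sequence is decreasing. -/
def WinningStratII {P : Type*} (le : P → P → Prop) (μ : Ordinal) : Prop :=
  ∃ σ : (β : Ordinal) → ({γ : Ordinal // γ < β} → P) → P,
    ∀ g : Ordinal → P,
      (∀ β, β < μ →
        (EvenOrd β → g β = σ β (fun γ => g γ.1)) ∧
        (¬ EvenOrd β → ∀ γ, γ < β → le (g β) (g γ))) →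
      ∀ γ β, γ < β → β < μ → le (g β) (g γ)

/-- `p` is a condition of the vanilla forcing `𝕊^κ_θ`: a normal uniformly homogeneous
tree `T ⊆ ^{<κ}κ` of successor height `η + 1` with all levels of size `< κ`, together with
a `θ`-ascent path (with co-bounded supports). -/
def IsSCondTheta (κ θc : Cardinal) (p : SCond) : Prop :=
  (∀ t ∈ p.T, ∃ α, α ≤ p.η ∧ IsNodeOf κ.ord α t) ∧
  IsStreamlined p.T ∧
  UnifHomog p.T ∧
  IsNormalOfHeight p.T (p.η + 1) ∧
  (∀ α, α ≤ p.η → (level p.T α).Nonempty) ∧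
  (∀ α, α ≤ p.η → Cardinal.mk ↥(level p.T α) < Cardinal.lift.{1} κ) ∧
  (∀ α, α ≤ p.η → ∀ τ, τ < θc.ord → p.f α τ ∈ level p.T α) ∧
  (∀ α β, α < β → β ≤ p.η →
    ∃ τ₀, τ₀ < θc.ord ∧ ∀ τ, τ₀ ≤ τ → τ < θc.ord → τ ∈ supp θc.ord (p.f α) (p.f β))

/-!
Put a new top level on `T` made of the one-point extensions `t⌢0` and `t⌢1` of the nodes `t`
of the old top level `T_η`; the tree stays streamlined, normal and of width `< κ`, and uniformly
homogeneous since `s * (t⌢i) = (s * t)⌢i` for `s` below the top. Continue the ascent path by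
`f(η+1)(τ) = f(η)(τ)⌢1` for `τ ≠ 0` and `f(η+1)(0) = f(η)(1)⌢0`: only the coordinate `0` leaves
the path through `f(η)`, so the supports stay co-bounded, and `f(η+1)(0)`, `f(η+1)(1)` first
differ at `η`.
-/

lemma ndom_mono {s t : PNode} (h : s ⊆ t) : ndom s ⊆ ndom t :=
  fun _ ⟨v, hv⟩ => ⟨v, h hv⟩

lemma ndom_insert (t : PNode) (α v : Ordinal) : ndom (insert (α, v) t) = insert α (ndom t) := by
  ext ε
  simp only [ndom, mem_insert_iff, Prod.mk.injEq, mem_ofPred_eq]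
  aesop

lemma ndom_insert_of_ndom_eq {t : PNode} {α : Ordinal} (h : ndom t = Iio α) (v : Ordinal) :
    ndom (insert (α, v) t) = Iio (α + 1) := by
  rw [ndom_insert, h, Set.Iio_insert, Set.Iio_add_one_eq_Iic]

lemma ndom_nrestrict (t : PNode) (α : Ordinal) : ndom (nrestrict t α) = ndom t ∩ Iio α := by
  ext ε
  simp only [ndom, nrestrict, mem_ofPred_eq, mem_inter_iff, mem_Iio]
  aesop

lemma nrestrict_insert_of_le (t : PNode) {α η : Ordinal} (h : α ≤ η) (v : Ordinal) :
    nrestrict (insert (η, v) t) α = nrestrict t α := by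
  ext ⟨ε, w⟩
  simp only [nrestrict, mem_ofPred_eq, mem_insert_iff, Prod.mk.injEq]
  constructor
  · rintro ⟨⟨rfl, rfl⟩ | hw, hε⟩
    · exact absurd h (not_le.mpr hε)
    · exact ⟨hw, hε⟩
  · exact fun ⟨hw, hε⟩ => ⟨Or.inr hw, hε⟩

lemma nrestrict_eq_self {t : PNode} {α : Ordinal} (h : ndom t ⊆ Iio α) : nrestrict t α = t :=
  Set.sep_eq_self_iff_mem_true.mpr fun p hp => h ⟨p.2, hp⟩

lemma ndom_nstar (s t : PNode) : ndom (nstar s t) = ndom t := by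
  ext ε
  simp only [ndom, nstar, mem_union, mem_ofPred_eq]
  constructor
  · rintro ⟨v, ⟨-, hε⟩ | ⟨hv, -⟩⟩
    exacts [hε, ⟨v, hv⟩]
  · rintro ⟨v, hv⟩
    by_cases hs : ∃ w, (ε, w) ∈ s
    · obtain ⟨w, hw⟩ := hs
      exact ⟨w, Or.inl ⟨hw, v, hv⟩⟩
    · exact ⟨v, Or.inr ⟨hv, hs⟩⟩

lemma nstar_insert_right {s : PNode} {α : Ordinal} (h : α ∉ ndom s) (t : PNode) (v : Ordinal) :
    nstar s (insert (α, v) t) = insert (α, v) (nstar s t) := by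
  ext ⟨ε, w⟩
  simp only [nstar, ndom_insert, mem_union, mem_ofPred_eq, mem_insert_iff, Prod.mk.injEq]
  constructor
  · rintro (⟨hw, rfl | hε⟩ | ⟨⟨rfl, rfl⟩ | hw, hε⟩)
    · exact absurd ⟨w, hw⟩ h
    all_goals tauto
  · rintro (⟨rfl, rfl⟩ | ⟨hw, hε⟩ | ⟨hw, hε⟩)
    all_goals tauto

lemma nstar_insert_left {t : PNode} {α : Ordinal} (h : α ∉ ndom t) (s : PNode) (v : Ordinal) :
    nstar (insert (α, v) s) t = nstar s t := by
  ext ⟨ε, w⟩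
  simp only [nstar, ndom_insert, mem_union, mem_ofPred_eq, mem_insert_iff, Prod.mk.injEq]
  constructor
  · rintro (⟨⟨rfl, rfl⟩ | hw, hε⟩ | ⟨hw, hε⟩)
    · exact absurd hε h
    all_goals tauto
  · rintro (⟨hw, hε⟩ | ⟨hw, hε⟩)
    · tauto
    · refine Or.inr ⟨hw, ?_⟩
      rintro (rfl | hε')
      exacts [h ⟨w, hw⟩, hε hε']

lemma nstar_eq_left_of_ndom_eq {s t : PNode} (h : ndom s = ndom t) : nstar s t = s := by
  ext ⟨ε, w⟩
  simp only [nstar, mem_union, mem_ofPred_eq, ← h]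
  exact ⟨fun hw => hw.elim And.left fun ⟨hw, hε⟩ => absurd ⟨w, hw⟩ (h ▸ hε),
    fun hw => Or.inl ⟨hw, w, hw⟩⟩

lemma IsNodeOf.ndom_eq {ν α : Ordinal} {t : PNode} (h : IsNodeOf ν α t) : ndom t = Iio α := by
  ext ε
  refine ⟨fun ⟨v, hv⟩ => (h.1 _ hv).1, fun hε => ?_⟩
  obtain ⟨v, hv, -⟩ := h.2 ε hε
  exact ⟨v, hv⟩

lemma IsNodeOf.eq_of_mem_of_mem {ν α : Ordinal} {t : PNode} (h : IsNodeOf ν α t)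
    {ε v w : Ordinal} (hv : (ε, v) ∈ t) (hw : (ε, w) ∈ t) : v = w :=
  (h.2 ε (h.1 _ hv).1).unique hv hw

lemma IsNodeOf.insert {ν α : Ordinal} {t : PNode} (h : IsNodeOf ν α t) {v : Ordinal}
    (hv : v < ν) : IsNodeOf ν (α + 1) (insert (α, v) t) := by
  refine ⟨?_, fun ε hε => ?_⟩
  · rintro p (rfl | hp)
    · exact ⟨lt_add_one α, hv⟩
    · exact ⟨(h.1 p hp).1.trans (lt_add_one α), (h.1 p hp).2⟩
  · have hα : α ∉ ndom t := by simp [h.ndom_eq]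
    rcases (Order.lt_add_one_iff.mp hε).lt_or_eq with hε | rfl
    · obtain ⟨w, hw, hw'⟩ := h.2 ε hε
      refine ⟨w, Or.inr hw, ?_⟩
      rintro u (hu | hu)
      · exact absurd (congrArg Prod.fst hu) hε.ne
      · exact hw' u hu
    · refine ⟨v, Or.inl rfl, ?_⟩
      rintro u (hu | hu)
      · exact congrArg Prod.snd hu
      · exact absurd ⟨u, hu⟩ hα

lemma nDelta_insert_insert {ν α : Ordinal} {t : PNode} (ht : IsNodeOf ν α t) {v w : Ordinal}
    (hvw : v ≠ w) : nDelta (insert (α, v) t) (insert (α, w) t) = α := by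
  refine IsLeast.csInf_eq ⟨Or.inr ⟨v, w, Or.inl rfl, Or.inl rfl, hvw⟩, fun δ hδ => ?_⟩
  by_contra! hδα
  have hδt : δ ∈ ndom t := ht.ndom_eq ▸ hδα
  have hδ_ne : ∀ u u' : Ordinal, (δ, u) ≠ (α, u') := fun _ _ h => hδα.ne (congrArg Prod.fst h)
  rcases hδ with (hδ | hδ) | ⟨v', w', hv', hw', hne⟩
  · exact hδ (ndom_mono (subset_insert _ _) hδt)
  · exact hδ (ndom_mono (subset_insert _ _) hδt)
  · exact hne (ht.eq_of_mem_of_mem (hv'.resolve_left (hδ_ne v' v))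
      (hw'.resolve_left (hδ_ne w' w)))

def succLevel (T : Set PNode) (η : Ordinal) (V : Set Ordinal) : Set PNode :=
  image2 (fun t v => insert (η, v) t) (level T η) V

def addLevel (T : Set PNode) (η : Ordinal) (V : Set Ordinal) : Set PNode :=
  T ∪ succLevel T η V

section addLevel

variable {T : Set PNode} {η : Ordinal} {V : Set Ordinal}

lemma ndom_of_mem_succLevel {s : PNode} (hs : s ∈ succLevel T η V) : ndom s = Iio (η + 1) := by
  obtain ⟨t, ht, v, -, rfl⟩ := hs
  exact ndom_insert_of_ndom_eq ht.2 v

lemma mk_succLevel_le : Cardinal.mk (succLevel T η V) ≤ Cardinal.mk (level T η) * Cardinal.mk V :=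
  Cardinal.mk_image2_le

lemma level_addLevel_of_le {α : Ordinal} (hα : α ≤ η) : level (addLevel T η V) α = level T α := by
  ext t
  refine ⟨fun ⟨ht, hdom⟩ => ⟨ht.resolve_right fun hnew => ?_, hdom⟩,
    fun ⟨ht, hdom⟩ => ⟨Or.inl ht, hdom⟩⟩
  rw [ndom_of_mem_succLevel hnew, Iio_inj] at hdom
  exact (Order.lt_add_one_iff.mpr hα).ne' hdom

lemma level_addLevel_add_one (hT : ∀ t ∈ T, ndom t ⊆ Iio η) :
    level (addLevel T η V) (η + 1) = succLevel T η V := by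
  ext t
  refine ⟨fun ⟨ht, hdom⟩ => ht.resolve_left fun hold => ?_,
    fun ht => ⟨Or.inr ht, ndom_of_mem_succLevel ht⟩⟩
  have : η ∈ ndom t := hdom ▸ lt_add_one η
  exact lt_irrefl η (hT t hold this)

lemma IsStreamlined.addLevel (hT : IsStreamlined T) : IsStreamlined (addLevel T η V) := by
  rintro x (hx | ⟨t, ht, v, hv, rfl⟩) α
  · exact Or.inl (hT x hx α)
  rcases le_or_gt α η with hαη | hηα
  · rw [nrestrict_insert_of_le t hαη]
    exact Or.inl (hT t ht.1 α)
  · have hdom := Iio_subset_Iio (Order.add_one_le_of_lt hηα)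
    rw [← ndom_insert_of_ndom_eq ht.2 v] at hdom
    rw [nrestrict_eq_self hdom]
    exact Or.inr ⟨t, ht, v, hv, rfl⟩

lemma UnifHomog.addLevel (hT : ∀ t ∈ T, ndom t ⊆ Iio η) (hU : UnifHomog T) :
    UnifHomog (addLevel T η V) := by
  have hη : ∀ t ∈ T, η ∉ ndom t := fun t ht hη => lt_irrefl η (hT t ht hη)
  rintro s (hs | ⟨s', hs', v, hv, rfl⟩) t (ht | ⟨t', ht', w, hw, rfl⟩)
  · exact Or.inl (hU s hs t ht)
  · rw [nstar_insert_right (hη s hs)]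
    exact Or.inr ⟨nstar s t', ⟨hU s hs t' ht'.1, (ndom_nstar s t').trans ht'.2⟩, w, hw, rfl⟩
  · rw [nstar_insert_left (hη t ht)]
    exact Or.inl (hU s' hs'.1 t ht)
  · rw [nstar_eq_left_of_ndom_eq ((ndom_insert_of_ndom_eq hs'.2 v).trans
      (ndom_insert_of_ndom_eq ht'.2 w).symm)]
    exact Or.inr ⟨s', hs', v, hv, rfl⟩

lemma IsNormalOfHeight.exists_level_superset (hT : ∀ t ∈ T, ndom t ⊆ Iio η)
    (hN : IsNormalOfHeight T (η + 1)) {x : PNode} (hx : x ∈ T) : ∃ y ∈ level T η, x ⊆ y := by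
  obtain ⟨y, hy, hxy | hyx⟩ := hN x hx η (lt_add_one η)
  · exact ⟨y, hy, hxy⟩
  · have hdom : ndom x = Iio η := (hT x hx).antisymm (hy.2 ▸ ndom_mono hyx)
    exact ⟨x, ⟨hx, hdom⟩, subset_rfl⟩

lemma IsNormalOfHeight.addLevel (hT : ∀ t ∈ T, ndom t ⊆ Iio η) (hS : IsStreamlined T)
    (hV : V.Nonempty) (hN : IsNormalOfHeight T (η + 1)) :
    IsNormalOfHeight (addLevel T η V) (η + 1 + 1) := by
  intro x hx α hα
  rcases (Order.lt_add_one_iff.mp hα).lt_or_eq with hαη | rfl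
  · have hαη := Order.lt_add_one_iff.mp hαη
    rw [level_addLevel_of_le hαη]
    rcases hx with hx | ⟨t, ht, v, -, rfl⟩
    · exact hN x hx α (Order.lt_add_one_iff.mpr hαη)
    · refine ⟨nrestrict t α, ⟨hS t ht.1 α, ?_⟩, Or.inr ?_⟩
      · rw [ndom_nrestrict, ht.2, Iio_inter_Iio, min_eq_right hαη]
      · exact (sep_subset t _).trans (subset_insert _ _)
  · rw [level_addLevel_add_one hT]
    rcases hx with hx | hx
    · obtain ⟨y, hy, hxy⟩ := hN.exists_level_superset hT hx
      obtain ⟨v, hv⟩ := hV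
      exact ⟨insert (η, v) y, ⟨y, hy, v, hv, rfl⟩, Or.inl (hxy.trans (subset_insert _ _))⟩
    · exact ⟨x, hx, Or.inl subset_rfl⟩

end addLevel

def splitPath (f : Ordinal → Ordinal → PNode) (η : Ordinal) : Ordinal → Ordinal → PNode :=
  fun α τ => if α = η + 1 then
      (if τ = 0 then insert (η, 0) (f η 1) else insert (η, 1) (f η τ))
    else f α τ

section splitPath

variable {f : Ordinal → Ordinal → PNode} {η : Ordinal}

lemma splitPath_of_le {α : Ordinal} (h : α ≤ η) (τ : Ordinal) : splitPath f η α τ = f α τ :=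
  if_neg (Order.lt_add_one_iff.mpr h).ne

lemma splitPath_add_one_zero : splitPath f η (η + 1) 0 = insert (η, 0) (f η 1) := by
  simp [splitPath]

lemma splitPath_add_one_of_ne_zero {τ : Ordinal} (h : τ ≠ 0) :
    splitPath f η (η + 1) τ = insert (η, 1) (f η τ) := by
  simp [splitPath, h]

end splitPath

@[simps]
def SCond.splitTop (p : SCond) : SCond :=
  ⟨addLevel p.T p.η {0, 1}, splitPath p.f p.η, p.η + 1⟩

lemma Cardinal.one_lt_ord_of_aleph0_le {c : Cardinal} (h : Cardinal.aleph0 ≤ c) : 1 < c.ord :=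
  Cardinal.lt_ord.mpr (by simpa using Cardinal.one_lt_aleph0.trans_le h)

namespace IsSCondTheta

variable {κ θ : Cardinal} {p : SCond}

lemma path_mem_level (hp : IsSCondTheta κ θ p) {α τ : Ordinal} (hα : α ≤ p.η)
    (hτ : τ < θ.ord) : p.f α τ ∈ level p.T α :=
  hp.2.2.2.2.2.2.1 α hα τ hτ

lemma cobounded (hp : IsSCondTheta κ θ p) {α β : Ordinal} (hαβ : α < β) (hβ : β ≤ p.η) :
    ∃ τ₀ < θ.ord, ∀ τ, τ₀ ≤ τ → τ < θ.ord → τ ∈ supp θ.ord (p.f α) (p.f β) :=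
  hp.2.2.2.2.2.2.2 α β hαβ hβ

lemma ndom_subset (hp : IsSCondTheta κ θ p) : ∀ t ∈ p.T, ndom t ⊆ Iio p.η := by
  intro t ht
  obtain ⟨α, hα, hnode⟩ := hp.1 t ht
  exact hnode.ndom_eq ▸ Iio_subset_Iio hα

lemma isNodeOf_of_mem_level (hp : IsSCondTheta κ θ p) {α : Ordinal} {t : PNode}
    (ht : t ∈ level p.T α) : IsNodeOf κ.ord α t := by
  obtain ⟨β, -, hnode⟩ := hp.1 t ht.1
  rwa [Iio_inj.mp (hnode.ndom_eq.symm.trans ht.2)] at hnode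

lemma splitTop_f_mem_level (hp : IsSCondTheta κ θ p) (hθ : 1 < θ.ord) {α τ : Ordinal}
    (hα : α ≤ p.η + 1) (hτ : τ < θ.ord) : p.splitTop.f α τ ∈ level p.splitTop.T α := by
  rcases hα.lt_or_eq with hα | rfl
  · have hα := Order.lt_add_one_iff.mp hα
    rw [SCond.splitTop_T, SCond.splitTop_f, level_addLevel_of_le hα, splitPath_of_le hα]
    exact hp.path_mem_level hα hτ
  rw [SCond.splitTop_T, SCond.splitTop_f, level_addLevel_add_one hp.ndom_subset]
  rcases eq_or_ne τ 0 with rfl | hτ0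
  · rw [splitPath_add_one_zero]
    exact mem_image2_of_mem (hp.path_mem_level le_rfl hθ) (mem_insert 0 {1})
  · rw [splitPath_add_one_of_ne_zero hτ0]
    exact mem_image2_of_mem (hp.path_mem_level le_rfl hτ) (mem_insert_of_mem 0 rfl)

lemma eventually_subset_top (hp : IsSCondTheta κ θ p) (hθ : 0 < θ.ord) {α : Ordinal}
    (hα : α ≤ p.η) : ∃ τ₀ < θ.ord, ∀ τ, τ₀ ≤ τ → τ < θ.ord → p.f α τ ⊆ p.f p.η τ := by
  rcases hα.lt_or_eq with hα | rfl
  · obtain ⟨τ₀, hτ₀, hsupp⟩ := hp.cobounded hα le_rfl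
    refine ⟨τ₀, hτ₀, fun τ hτ₀τ hτ => (hsupp τ hτ₀τ hτ).2.resolve_right fun hsub => ?_⟩
    have hdom := ndom_mono hsub
    rw [(hp.path_mem_level le_rfl hτ).2, (hp.path_mem_level hα.le hτ).2] at hdom
    exact lt_irrefl α (hdom hα)
  · exact ⟨0, hθ, fun τ _ _ => subset_rfl⟩

lemma splitTop_cobounded (hp : IsSCondTheta κ θ p) (hθ : 1 < θ.ord) {α β : Ordinal}
    (hαβ : α < β) (hβ : β ≤ p.η + 1) : ∃ τ₀ < θ.ord, ∀ τ, τ₀ ≤ τ → τ < θ.ord →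
      τ ∈ supp θ.ord (p.splitTop.f α) (p.splitTop.f β) := by
  rcases hβ.lt_or_eq with hβ | rfl
  · have hβ := Order.lt_add_one_iff.mp hβ
    obtain ⟨τ₀, hτ₀, hsupp⟩ := hp.cobounded hαβ hβ
    refine ⟨τ₀, hτ₀, fun τ hτ₀τ hτ => ?_⟩
    simpa only [supp, SCond.splitTop_f, splitPath_of_le hβ, splitPath_of_le (hαβ.le.trans hβ)]
      using hsupp τ hτ₀τ hτ
  have hα := Order.lt_add_one_iff.mp hαβ
  obtain ⟨τ₀, hτ₀, hsub⟩ := hp.eventually_subset_top (zero_lt_one.trans hθ) hα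
  refine ⟨max τ₀ 1, max_lt hτ₀ hθ, fun τ hτ₀τ hτ => ⟨hτ, Or.inl ?_⟩⟩
  have hτ0 : τ ≠ 0 := (zero_lt_one.trans_le ((le_max_right _ _).trans hτ₀τ)).ne'
  simp only [SCond.splitTop_f, splitPath_of_le hα, splitPath_add_one_of_ne_zero hτ0]
  exact (hsub τ ((le_max_left _ _).trans hτ₀τ) hτ).trans (subset_insert _ _)

lemma splitTop (hp : IsSCondTheta κ θ p) (hκ : Cardinal.aleph0 ≤ κ) (hθ : 1 < θ.ord) :
    IsSCondTheta κ θ p.splitTop := by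
  obtain ⟨hnode, hS, hU, hN, hne, hsmall, -, -⟩ := id hp
  have hκ1 := Cardinal.one_lt_ord_of_aleph0_le hκ
  have hκ_lift : Cardinal.aleph0 ≤ Cardinal.lift.{1} κ := by simpa using hκ
  refine ⟨?_, hS.addLevel, hU.addLevel hp.ndom_subset,
    hN.addLevel hp.ndom_subset hS (insert_nonempty 0 {1}), fun α (hα : α ≤ p.η + 1) => ?_,
    fun α (hα : α ≤ p.η + 1) => ?_, fun α hα τ hτ => hp.splitTop_f_mem_level hθ hα hτ,
    fun α β hαβ hβ => hp.splitTop_cobounded hθ hαβ hβ⟩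
  · rintro t (ht | ⟨t, ht, v, hv, rfl⟩)
    · obtain ⟨α, hα, htα⟩ := hnode t ht
      exact ⟨α, hα.trans (lt_add_one p.η).le, htα⟩
    · refine ⟨p.η + 1, le_rfl, (hp.isNodeOf_of_mem_level ht).insert ?_⟩
      rcases hv with rfl | rfl
      exacts [zero_lt_one.trans hκ1, hκ1]
  all_goals rcases hα.lt_or_eq with hα | rfl
  · rw [SCond.splitTop_T, level_addLevel_of_le (Order.lt_add_one_iff.mp hα)]
    exact hne α (Order.lt_add_one_iff.mp hα)
  · rw [SCond.splitTop_T, level_addLevel_add_one hp.ndom_subset]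
    exact (hne p.η le_rfl).image2 (insert_nonempty 0 {1})
  · rw [SCond.splitTop_T, level_addLevel_of_le (Order.lt_add_one_iff.mp hα)]
    exact hsmall α (Order.lt_add_one_iff.mp hα)
  · rw [SCond.splitTop_T, level_addLevel_add_one hp.ndom_subset]
    exact mk_succLevel_le.trans_lt (Cardinal.mul_lt_of_lt hκ_lift (hsmall p.η le_rfl)
      ((Cardinal.lt_aleph0_of_finite _).trans_le hκ_lift))

lemma sext_splitTop (hp : IsSCondTheta κ θ p) (θo : Ordinal) : sext θo p.splitTop p := by
  refine ⟨(lt_add_one p.η).le, fun t => ⟨fun ht => ?_, fun ⟨ht, α, hα, hdom⟩ => ?_⟩,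
    fun α hα τ _ => splitPath_of_le hα τ⟩
  · obtain ⟨α, hα, hnode⟩ := hp.1 t ht
    exact ⟨Or.inl ht, α, hα, hnode.ndom_eq⟩
  · have ht : t ∈ level p.splitTop.T α := ⟨ht, hdom⟩
    rw [SCond.splitTop_T, level_addLevel_of_le hα] at ht
    exact ht.1

lemma nDelta_splitTop (hp : IsSCondTheta κ θ p) (hθ : 1 < θ.ord) :
    nDelta (p.splitTop.f (p.η + 1) 0) (p.splitTop.f (p.η + 1) 1) = p.η := by
  simp only [SCond.splitTop_f]
  rw [splitPath_add_one_zero, splitPath_add_one_of_ne_zero one_ne_zero]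
  exact nDelta_insert_insert (hp.isNodeOf_of_mem_level (hp.path_mem_level le_rfl hθ))
    zero_ne_one

end IsSCondTheta

theorem statement0_general
    (θ κ : Cardinal) (hθreg : θ.IsRegular) (hκreg : κ.IsRegular)
    (p : SCond) (hp : IsSCondTheta κ θ p) :
    ∃ q : SCond, IsSCondTheta κ θ q ∧ sext θ.ord q p ∧ q.η = p.η + 1 ∧
      ∃ τ τ' : Ordinal, τ < τ' ∧ τ' < θ.ord ∧
        nDelta (q.f (p.η + 1) τ) (q.f (p.η + 1) τ') = p.η := by
  have hθ := Cardinal.one_lt_ord_of_aleph0_le hθreg.aleph0_le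
  exact ⟨p.splitTop, hp.splitTop hκreg.aleph0_le hθ, hp.sext_splitTop θ.ord, rfl,
    0, 1, zero_lt_one, hθ, hp.nDelta_splitTop hθ⟩

/-- below every condition of `𝕊^κ_θ`, of height `α + 1` say, there is a
condition of height `α + 2` whose top level of the ascent path contains two nodes that
first disagree exactly at `α`. -/
theorem statement0
    (θ κ : Cardinal) (hθreg : θ.IsRegular) (hκreg : κ.IsRegular) (hθκ : θ < κ)
    (hκunc : Cardinal.aleph0 < κ)
    (p : SCond) (hp : IsSCondTheta κ θ p) :
    ∃ q : SCond, IsSCondTheta κ θ q ∧ sext θ.ord q p ∧ q.η = p.η + 1 ∧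
      ∃ τ τ' : Ordinal, τ < τ' ∧ τ' < θ.ord ∧
        nDelta (q.f (p.η + 1) τ) (q.f (p.η + 1) τ') = p.η :=
  statement0_general θ κ hθreg hκreg p hp
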